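/- Let a, a' : ℕ≥1 → (0,∞) agree on l ≤ n, with convergent G = Σ_{m≥1} Π_{l=1}^m a(l) and G' = Σ_{m≥1} Π_{l=1}^m a'(l). Define steady-state probabilities π(m) = (Π_{l=1}^m a(l))/(1+G) (with π(0) = 1/(1+G)) and π'(m) analogously. Then there exists σ with |σ| ≤ max(δ(n), δ'(n)) (where δ, δ' are the tail sums beyond n) such that π'(m) = (1+σ) π(m) for all m = 0,1,…,n. -/

import Mathlib

/-!
Write `p m = ∏_{l=1}^m a l`, so `G = ∑_{m ≥ 1} p m`, and take `1 + σ = (1 + G) / (1 + G')`.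
Since `a` and `a'` agree up to `n`, so do `p` and `p'`: hence `π' m = (1 + σ) π m` for `m ≤ n`,
and the first `n` terms of `G` and `G'` cancel in `G - G' = δ n - δ' n`. Then
`|σ| = |G - G'| / (1 + G') ≤ |δ n - δ' n| ≤ max (δ n) (δ' n)` as all these sums are nonnegative.
-/

open Finset

lemma prod_Icc_one_congr_of_le {M : Type*} [CommMonoid M] {a a' : ℕ → M} {m n : ℕ}
    (hagree : ∀ l, 1 ≤ l → l ≤ n → a l = a' l) (hm : m ≤ n) :
    ∏ l ∈ Icc 1 m, a l = ∏ l ∈ Icc 1 m, a' l :=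
  prod_congr rfl fun l hl => hagree l (mem_Icc.1 hl).1 ((mem_Icc.1 hl).2.trans hm)

lemma tsum_sub_tsum_eq_tail_sub_tail {α : Type*} [AddCommGroup α] [TopologicalSpace α]
    [IsTopologicalAddGroup α] [T2Space α] {f g : ℕ → α} (hf : Summable f) (hg : Summable g) (n : ℕ)
    (hfg : ∀ m < n, f m = g m) :
    ∑' m, f m - ∑' m, g m = ∑' m, f (m + n) - ∑' m, g (m + n) := by
  have hhead : ∑ m ∈ range n, f m = ∑ m ∈ range n, g m :=
    sum_congr rfl fun m hm => hfg m (mem_range.1 hm)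
  rw [← hf.sum_add_tsum_nat_add n, ← hg.sum_add_tsum_nat_add n, hhead, add_sub_add_left_eq_sub]

lemma abs_sub_le_max_of_nonneg {α : Type*} [AddCommGroup α] [LinearOrder α]
    [IsOrderedAddMonoid α] {x y : α} (hx : 0 ≤ x) (hy : 0 ≤ y) :
    |x - y| ≤ max x y :=
  abs_sub_le_iff.2
    ⟨(sub_le_self x hy).trans (le_max_left x y), (sub_le_self y hx).trans (le_max_right x y)⟩

lemma abs_one_add_div_one_add_sub_one_le {α : Type*} [Field α] [LinearOrder α]
    [IsStrictOrderedRing α] {G G' : α} (hG' : 0 ≤ G') :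
    |(1 + G) / (1 + G') - 1| ≤ |G - G'| := by
  have hpos : 0 < 1 + G' := by linarith
  rw [div_sub_one hpos.ne', add_sub_add_left_eq_sub, abs_div, abs_of_pos hpos]
  exact div_le_self (abs_nonneg _) (by linarith)

/-- Near-proportionality of the stationary distributions of two birth–death
queues whose rate ratios agree on states `1,…,n`: there is `σ` with
`|σ| ≤ max (δ n) (δ' n)` such that `π'(m) = (1+σ) π(m)` for all `m ≤ n`,
where `π(m) = (∏_{l=1}^m a l)/(1+G)`. -/
theorem stmt_11 (a a' : ℕ → ℝ) (n : ℕ)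
    (ha : ∀ l, 1 ≤ l → 0 < a l) (ha' : ∀ l, 1 ≤ l → 0 < a' l)
    (hagree : ∀ l, 1 ≤ l → l ≤ n → a l = a' l)
    (hG : Summable (fun m : ℕ => ∏ l ∈ Finset.Icc 1 (m + 1), a l))
    (hG' : Summable (fun m : ℕ => ∏ l ∈ Finset.Icc 1 (m + 1), a' l)) :
    ∃ σ : ℝ,
      |σ| ≤ max (∑' m : ℕ, ∏ l ∈ Finset.Icc 1 (m + n + 1), a l)
              (∑' m : ℕ, ∏ l ∈ Finset.Icc 1 (m + n + 1), a' l) ∧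
      ∀ m ≤ n,
        (∏ l ∈ Finset.Icc 1 m, a' l) /
            (1 + ∑' m' : ℕ, ∏ l ∈ Finset.Icc 1 (m' + 1), a' l) =
          (1 + σ) * ((∏ l ∈ Finset.Icc 1 m, a l) /
            (1 + ∑' m' : ℕ, ∏ l ∈ Finset.Icc 1 (m' + 1), a l)) := by
  have hp : ∀ m, 0 ≤ ∏ l ∈ Icc 1 m, a l := fun m =>
    prod_nonneg fun l hl => (ha l (mem_Icc.1 hl).1).le
  have hp' : ∀ m, 0 ≤ ∏ l ∈ Icc 1 m, a' l := fun m =>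
    prod_nonneg fun l hl => (ha' l (mem_Icc.1 hl).1).le
  set G := ∑' m : ℕ, ∏ l ∈ Icc 1 (m + 1), a l
  set G' := ∑' m : ℕ, ∏ l ∈ Icc 1 (m + 1), a' l
  set δ := ∑' m : ℕ, ∏ l ∈ Icc 1 (m + n + 1), a l
  set δ' := ∑' m : ℕ, ∏ l ∈ Icc 1 (m + n + 1), a' l
  have hG_sub : G - G' = δ - δ' :=
    tsum_sub_tsum_eq_tail_sub_tail hG hG' n fun m hm => prod_Icc_one_congr_of_le hagree hm
  have hG0 : 0 ≤ G := tsum_nonneg fun m => hp (m + 1)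
  have hG'0 : 0 ≤ G' := tsum_nonneg fun m => hp' (m + 1)
  refine ⟨(1 + G) / (1 + G') - 1, ?_, fun m hm => ?_⟩
  · calc |(1 + G) / (1 + G') - 1| ≤ |G - G'| := abs_one_add_div_one_add_sub_one_le hG'0
      _ = |δ - δ'| := by rw [hG_sub]
      _ ≤ max δ δ' := abs_sub_le_max_of_nonneg (tsum_nonneg fun m => hp (m + n + 1))
          (tsum_nonneg fun m => hp' (m + n + 1))
  · have h1G : 1 + G ≠ 0 := by linarith
    rw [prod_Icc_one_congr_of_le hagree hm, add_sub_cancel]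
    field_simp
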